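/- arXiv:math/0403366 — 4 statements merged into one kernel-verified Lean document; each statement's English description precedes it below -/
import Mathlib

section
/- Let f : 𝕊¹ → ℝ be given by the restriction of a rational function analytic in a neighborhood of the unit circle, real and non-negative on 𝕊¹, with f not identically 0. If a ∈ 𝕊¹ is a zero of f, then the order of vanishing of f at a is even. -/
open Complex

/-- A function holomorphic in a neighborhood of the unit circle, real and
non-negative on the circle and not identically zero, has zeros of even order
on the circle. -/
theorem zero_order_even_of_nonneg_on_circle
    (F : ℂ → ℂ)
    (hF : ∀ z ∈ Metric.sphere (0 : ℂ) 1, AnalyticAt ℂ F z)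
    (hreal : ∀ z ∈ Metric.sphere (0 : ℂ) 1, (F z).im = 0 ∧ 0 ≤ (F z).re)
    (hne : ∃ z ∈ Metric.sphere (0 : ℂ) 1, F z ≠ 0)
    (a : ℂ) (ha : a ∈ Metric.sphere (0 : ℂ) 1) (hFa : F a = 0) :
    ∃ n : ℕ, analyticOrderAt F a = 2 * n := by
  have ha1 : ‖a‖ = 1 := by simpa using ha
  -- the order is finite
  have hfin : analyticOrderAt F a ≠ ⊤ := by
    intro htop
    rw [analyticOrderAt_eq_top] at htop
    obtain ⟨z, hz, hzne⟩ := hne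
    have hpre : IsPreconnected (Metric.sphere (0:ℂ) 1) := by
      refine isPreconnected_sphere ?_ 0 1
      rw [rank_real_complex]; norm_num
    have := AnalyticOnNhd.eqOn_zero_of_preconnected_of_eventuallyEq_zero
      (f := F) hF hpre ha htop
    exact hzne (this hz)
  obtain ⟨k, hk⟩ := WithTop.ne_top_iff_exists.mp hfin
  obtain ⟨g, hg, hga, hfac⟩ := ((hF a ha).analyticOrderAt_eq_natCast (n := k)).mp hk.symm
  simp only [smul_eq_mul] at hfac
  -- the circle parametrization
  set φ : ℝ → ℂ := fun θ => a * Complex.exp (θ * I) with hφdef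
  have hφcont : Continuous φ := by fun_prop
  have hφ0 : φ 0 = a := by simp [hφdef]
  have hφmem : ∀ θ : ℝ, φ θ ∈ Metric.sphere (0:ℂ) 1 := by
    intro θ
    rw [mem_sphere_zero_iff_norm, hφdef]
    rw [norm_mul, ha1, one_mul, Complex.norm_exp_ofReal_mul_I]
  have hane : a ≠ 0 := by
    intro h; rw [h] at ha1; simp at ha1
  -- the comparison function
  set s : ℝ → ℂ := fun θ => (-Complex.exp (θ * I))^k * (g (φ θ) / g (φ (-θ))) with hsdef
  have htendφ : Filter.Tendsto φ (nhds 0) (nhds a) := by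
    have := hφcont.tendsto 0; rwa [hφ0] at this
  have htendφ' : Filter.Tendsto (fun θ : ℝ => φ (-θ)) (nhds 0) (nhds a) := by
    have hneg : Filter.Tendsto (fun θ : ℝ => -θ) (nhds 0) (nhds 0) := by
      have := continuous_neg.tendsto (0:ℝ); simpa using this
    exact htendφ.comp hneg
  have htendg : Filter.Tendsto (fun θ : ℝ => g (φ θ)) (nhds 0) (nhds (g a)) :=
    hg.continuousAt.tendsto.comp htendφ
  have htendg' : Filter.Tendsto (fun θ : ℝ => g (φ (-θ))) (nhds 0) (nhds (g a)) :=
    hg.continuousAt.tendsto.comp htendφ'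
  have hstend : Filter.Tendsto s (nhds 0) (nhds ((-1:ℂ)^k)) := by
    have h1 : Filter.Tendsto (fun θ : ℝ => (-Complex.exp (θ * I))^k) (nhds 0)
        (nhds ((-1:ℂ)^k)) := by
      have hc : Continuous fun θ : ℝ => (-Complex.exp (θ * I))^k := by fun_prop
      have := hc.tendsto 0
      simpa using this
    have h2 : Filter.Tendsto (fun θ : ℝ => g (φ θ) / g (φ (-θ))) (nhds 0) (nhds 1) := by
      have := htendg.div htendg' hga
      rw [div_self hga] at this; exact this
    have := h1.mul h2
    simpa using this
  -- the closed target set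
  set C : Set ℂ := {z : ℂ | z.im = 0 ∧ 0 ≤ z.re} with hCdef
  have hC : IsClosed C := by
    have : C = Complex.im ⁻¹' {0} ∩ Complex.re ⁻¹' (Set.Ici 0) :=
      Set.ext fun z => ⟨fun h => ⟨h.1, h.2⟩, fun h => ⟨h.1, h.2⟩⟩
    rw [this]
    exact (isClosed_singleton.preimage Complex.continuous_im).inter
      (isClosed_Ici.preimage Complex.continuous_re)
  -- eventually, s θ = F (φ θ) / F (φ (-θ)) ∈ C
  have hev : ∀ᶠ θ : ℝ in nhdsWithin 0 (Set.Ioi 0), s θ ∈ C := by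
    have e1 : ∀ᶠ θ : ℝ in nhds 0, F (φ θ) = (φ θ - a)^k * g (φ θ) := htendφ.eventually hfac
    have e2 : ∀ᶠ θ : ℝ in nhds 0, F (φ (-θ)) = (φ (-θ) - a)^k * g (φ (-θ)) :=
      htendφ'.eventually hfac
    have e3 : ∀ᶠ θ : ℝ in nhds 0, g (φ θ) ≠ 0 := htendg.eventually_ne hga
    have e4 : ∀ᶠ θ : ℝ in nhds 0, g (φ (-θ)) ≠ 0 := htendg'.eventually_ne hga
    have e5 : ∀ᶠ θ : ℝ in nhdsWithin 0 (Set.Ioi 0), θ ∈ Set.Ioo (0:ℝ) 1 :=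
      Ioo_mem_nhdsGT_of_mem (by norm_num : (0:ℝ) ∈ Set.Ico 0 1)
    filter_upwards [(e1.and (e2.and (e3.and e4))).filter_mono nhdsWithin_le_nhds, e5]
      with θ ⟨h1, h2, h3, h4⟩ ⟨hθ0, hθ1⟩
    -- φ (-θ) ≠ a
    have hexpne : Complex.exp ((-θ:ℝ) * I) ≠ 1 := by
      intro h
      obtain ⟨n, hn⟩ := Complex.exp_eq_one_iff.mp h
      have hre : -θ = (n:ℝ) * (2 * Real.pi) := by
        have : ((-θ:ℝ) : ℂ) = (n:ℝ) * (2 * Real.pi) := by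
          apply mul_right_cancel₀ Complex.I_ne_zero
          rw [hn]; push_cast; ring
        exact_mod_cast congrArg Complex.re this
      have hpi := Real.pi_gt_three
      rcases lt_trichotomy n 0 with hn' | hn' | hn'
      · have : (n:ℝ) ≤ -1 := by exact_mod_cast (by omega : n ≤ -1)
        nlinarith
      · rw [hn'] at hre; simp at hre; linarith
      · have : (1:ℝ) ≤ (n:ℝ) := by exact_mod_cast hn'
        nlinarith
    have hφne : φ (-θ) - a ≠ 0 := by
      rw [sub_ne_zero]
      intro h
      apply hexpne
      have h' : a * Complex.exp ((-θ:ℝ) * I) = a * 1 := by rw [mul_one]; exact h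
      exact mul_left_cancel₀ hane h'
    -- F (φ (-θ)) is a positive real
    have hv := hreal _ (hφmem (-θ))
    have hu := hreal _ (hφmem θ)
    have hvne : F (φ (-θ)) ≠ 0 := by
      rw [h2]
      exact mul_ne_zero (pow_ne_zero _ hφne) h4
    have hvre : 0 < (F (φ (-θ))).re := by
      rcases hv.2.lt_or_eq with h | h
      · exact h
      · exact absurd (Complex.ext h.symm hv.1) hvne
    -- key algebraic identity
    have hee : Complex.exp (θ * I) * Complex.exp ((-θ:ℝ) * I) = 1 := by
      rw [← Complex.exp_add]
      push_cast
      ring_nf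
      exact Complex.exp_zero
    have hid : φ θ - a = (-Complex.exp (θ * I)) * (φ (-θ) - a) := by
      simp only [hφdef]
      linear_combination a * hee
    have hs_eq : s θ = F (φ θ) / F (φ (-θ)) := by
      rw [hsdef, h1, h2, hid, mul_pow]
      field_simp
    -- conclude membership in C
    have huc : F (φ θ) = ((F (φ θ)).re : ℂ) := Complex.ext rfl (by simp [hu.1])
    have hvc : F (φ (-θ)) = ((F (φ (-θ))).re : ℂ) := Complex.ext rfl (by simp [hv.1])
    rw [hs_eq, huc, hvc, ← Complex.ofReal_div]
    exact ⟨by simp, by simpa using div_nonneg hu.2 hvre.le⟩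
  have hmemC : (-1:ℂ)^k ∈ C :=
    hC.mem_of_tendsto (hstend.mono_left nhdsWithin_le_nhds) hev
  -- hence k is even
  have hkeven : Even k := by
    by_contra hodd
    rw [Nat.not_even_iff_odd] at hodd
    have h2 : (0:ℝ) ≤ ((-1:ℂ)^k).re := hmemC.2
    rw [hodd.neg_one_pow] at h2
    simp only [Complex.neg_re, Complex.one_re] at h2
    linarith
  obtain ⟨n, hn⟩ := hkeven
  exact ⟨n, by rw [← hk, hn, two_mul]; push_cast; rfl⟩
end

section
/- Let H₁, H₂ ∈ GL₂(ℂ) with [H₁, H₂] ≠ 0, and suppose there exists C ∈ GL₂(ℂ) with C·H₁·C⁻¹ and C·H₂·C⁻¹ both unitary. Define the linear map L : M₂(ℂ) → M₂(ℂ)² by L(X) = (X·H₁ − (H₁*)⁻¹·X, X·H₂ − (H₂*)⁻¹·X). Then the kernel of L is one-dimensional, spanned by C*·C. -/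
open Matrix

lemma scalar_of_comm (Y A B : Matrix (Fin 2) (Fin 2) ℂ)
    (h1 : Y * A = A * Y) (h2 : Y * B = B * Y) (hAB : A * B ≠ B * A) :
    ∃ c : ℂ, Y = c • (1 : Matrix (Fin 2) (Fin 2) ℂ) := by
  by_contra hY
  apply hAB
  have hns : Y 0 1 ≠ 0 ∨ Y 1 0 ≠ 0 ∨ Y 0 0 ≠ Y 1 1 := by
    by_contra h
    push_neg at h
    refine hY ⟨Y 0 0, ?_⟩
    ext i j
    fin_cases i <;> fin_cases j <;>
      simp [h.1, h.2.1, h.2.2, Matrix.one_apply, Matrix.smul_apply]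
  have eA1 : (Y*A) 0 0 = (A*Y) 0 0 := by rw [h1]
  have eA2 : (Y*A) 0 1 = (A*Y) 0 1 := by rw [h1]
  have eA3 : (Y*A) 1 0 = (A*Y) 1 0 := by rw [h1]
  have eB1 : (Y*B) 0 0 = (B*Y) 0 0 := by rw [h2]
  have eB2 : (Y*B) 0 1 = (B*Y) 0 1 := by rw [h2]
  have eB3 : (Y*B) 1 0 = (B*Y) 1 0 := by rw [h2]
  simp only [Matrix.mul_apply, Fin.sum_univ_two] at eA1 eA2 eA3 eB1 eB2 eB3
  set a := Y 0 0; set b := Y 0 1; set c := Y 1 0; set d := Y 1 1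
  set p := A 0 0; set q := A 0 1; set r := A 1 0; set s := A 1 1
  set p' := B 0 0; set q' := B 0 1; set r' := B 1 0; set s' := B 1 1
  have fA1 : b*r = q*c := by linear_combination eA1
  have fA2 : q*(a-d) = b*(p-s) := by linear_combination eA2
  have fA3 : r*(a-d) = c*(p-s) := by linear_combination -eA3
  have fB1 : b*r' = q'*c := by linear_combination eB1
  have fB2 : q'*(a-d) = b*(p'-s') := by linear_combination eB2
  have fB3 : r'*(a-d) = c*(p'-s') := by linear_combination -eB3
  have key : q*r' = r*q' ∧ q'*(p-s) = q*(p'-s') ∧ r*(p'-s') = r'*(p-s) := by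
    rcases hns with hb | hc | he
    · refine ⟨mul_left_cancel₀ hb (by linear_combination q*fB1 - q'*fA1), ?_, ?_⟩
      · exact mul_left_cancel₀ hb (by linear_combination q*fB2 - q'*fA2)
      · have k1 : q*r' = r*q' := mul_left_cancel₀ hb (by linear_combination q*fB1 - q'*fA1)
        exact mul_left_cancel₀ hb (by linear_combination r'*fA2 - r*fB2 - (a-d)*k1)
    · refine ⟨mul_left_cancel₀ hc (by linear_combination r*fB1 - r'*fA1), ?_, ?_⟩
      · have k1 : q*r' = r*q' := mul_left_cancel₀ hc (by linear_combination r*fB1 - r'*fA1)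
        exact mul_left_cancel₀ hc (by linear_combination q*fB3 - q'*fA3 - (a-d)*k1)
      · exact mul_left_cancel₀ hc (by linear_combination r'*fA3 - r*fB3)
    · have he' : a - d ≠ 0 := sub_ne_zero.mpr he
      refine ⟨mul_left_cancel₀ he' (by linear_combination r'*fA2 - q'*fA3 + (p-s)*fB1), ?_, ?_⟩
      · exact mul_left_cancel₀ he' (by linear_combination (p-s)*fB2 - (p'-s')*fA2)
      · exact mul_left_cancel₀ he' (by linear_combination (p'-s')*fA3 - (p-s)*fB3)
  obtain ⟨k1, k2, k3⟩ := key
  have g1 : (A*B) 0 0 = (B*A) 0 0 := by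
    simp only [Matrix.mul_apply, Fin.sum_univ_two]; linear_combination k1
  have g2 : (A*B) 0 1 = (B*A) 0 1 := by
    simp only [Matrix.mul_apply, Fin.sum_univ_two]; linear_combination k2
  have g3 : (A*B) 1 0 = (B*A) 1 0 := by
    simp only [Matrix.mul_apply, Fin.sum_univ_two]; linear_combination k3
  have g4 : (A*B) 1 1 = (B*A) 1 1 := by
    simp only [Matrix.mul_apply, Fin.sum_univ_two]; linear_combination -k1
  ext i j
  fin_cases i <;> fin_cases j <;> [exact g1; exact g2; exact g3; exact g4]

lemma conj_rel (H C : Matrix (Fin 2) (Fin 2) ℂ) (hC : IsUnit C.det)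
    (hu : (C * H * C⁻¹) * (C * H * C⁻¹)ᴴ = 1) :
    Hᴴ * (Cᴴ * C) * H = Cᴴ * C := by
  have hu' : (C * H * C⁻¹)ᴴ * (C * H * C⁻¹) = 1 := mul_eq_one_comm.mp hu
  have hCH : IsUnit Cᴴ.det := by
    rw [Matrix.det_conjTranspose]; exact hC.star
  calc Hᴴ * (Cᴴ * C) * H
      = Cᴴ * ((C * H * C⁻¹)ᴴ * (C * H * C⁻¹)) * C := by
        simp only [Matrix.conjTranspose_mul, Matrix.conjTranspose_nonsing_inv,
          Matrix.mul_assoc]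
        rw [Matrix.nonsing_inv_mul _ hC, Matrix.mul_one,
          Matrix.mul_nonsing_inv_cancel_left _ _ hCH]
    _ = Cᴴ * C := by rw [hu', Matrix.mul_one]

theorem ker_dim_one_of_nondegenerate
    (H₁ H₂ C : Matrix (Fin 2) (Fin 2) ℂ)
    (hH₁ : IsUnit H₁) (hH₂ : IsUnit H₂) (hC : IsUnit C)
    (hnd : H₁ * H₂ ≠ H₂ * H₁)
    (hu₁ : (C * H₁ * C⁻¹) * (C * H₁ * C⁻¹)ᴴ = 1)
    (hu₂ : (C * H₂ * C⁻¹) * (C * H₂ * C⁻¹)ᴴ = 1) :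
    ∀ X : Matrix (Fin 2) (Fin 2) ℂ,
      (X * H₁ - (H₁ᴴ)⁻¹ * X = 0 ∧ X * H₂ - (H₂ᴴ)⁻¹ * X = 0) ↔
        ∃ c : ℂ, X = c • (Cᴴ * C) := by
  have hC' : IsUnit C.det := (Matrix.isUnit_iff_isUnit_det C).mp hC
  have hH₁d : IsUnit H₁.det := (Matrix.isUnit_iff_isUnit_det _).mp hH₁
  have hH₂d : IsUnit H₂.det := (Matrix.isUnit_iff_isUnit_det _).mp hH₂
  have hH₁s : IsUnit (H₁ᴴ).det := by rw [Matrix.det_conjTranspose]; exact hH₁d.star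
  have hH₂s : IsUnit (H₂ᴴ).det := by rw [Matrix.det_conjTranspose]; exact hH₂d.star
  have hPdet : IsUnit (Cᴴ * C).det := by
    rw [Matrix.det_mul, Matrix.det_conjTranspose]
    exact (hC'.star).mul hC'
  have k1 := conj_rel H₁ C hC' hu₁
  have k2 := conj_rel H₂ C hC' hu₂
  have r1 : Cᴴ * C * H₁ = (H₁ᴴ)⁻¹ * (Cᴴ * C) := by
    conv_rhs => rw [← k1]
    rw [Matrix.mul_assoc H₁ᴴ, Matrix.nonsing_inv_mul_cancel_left _ _ hH₁s]
  have r2 : Cᴴ * C * H₂ = (H₂ᴴ)⁻¹ * (Cᴴ * C) := by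
    conv_rhs => rw [← k2]
    rw [Matrix.mul_assoc H₂ᴴ, Matrix.nonsing_inv_mul_cancel_left _ _ hH₂s]
  intro X
  constructor
  · rintro ⟨hx1, hx2⟩
    rw [sub_eq_zero] at hx1 hx2
    have c1 : ((Cᴴ * C)⁻¹ * X) * H₁ = H₁ * ((Cᴴ * C)⁻¹ * X) := by
      calc ((Cᴴ * C)⁻¹ * X) * H₁ = (Cᴴ * C)⁻¹ * (X * H₁) := by rw [Matrix.mul_assoc]
        _ = (Cᴴ * C)⁻¹ * ((H₁ᴴ)⁻¹ * X) := by rw [hx1]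
        _ = (Cᴴ * C)⁻¹ * ((H₁ᴴ)⁻¹ * ((Cᴴ * C) * ((Cᴴ * C)⁻¹ * X))) := by
            rw [Matrix.mul_nonsing_inv_cancel_left _ _ hPdet]
        _ = (Cᴴ * C)⁻¹ * (((H₁ᴴ)⁻¹ * (Cᴴ * C)) * ((Cᴴ * C)⁻¹ * X)) := by
            simp only [Matrix.mul_assoc]
        _ = (Cᴴ * C)⁻¹ * (((Cᴴ * C) * H₁) * ((Cᴴ * C)⁻¹ * X)) := by rw [r1]
        _ = H₁ * ((Cᴴ * C)⁻¹ * X) := by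
            rw [Matrix.mul_assoc, Matrix.nonsing_inv_mul_cancel_left _ _ hPdet]
    have c2 : ((Cᴴ * C)⁻¹ * X) * H₂ = H₂ * ((Cᴴ * C)⁻¹ * X) := by
      calc ((Cᴴ * C)⁻¹ * X) * H₂ = (Cᴴ * C)⁻¹ * (X * H₂) := by rw [Matrix.mul_assoc]
        _ = (Cᴴ * C)⁻¹ * ((H₂ᴴ)⁻¹ * X) := by rw [hx2]
        _ = (Cᴴ * C)⁻¹ * ((H₂ᴴ)⁻¹ * ((Cᴴ * C) * ((Cᴴ * C)⁻¹ * X))) := by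
            rw [Matrix.mul_nonsing_inv_cancel_left _ _ hPdet]
        _ = (Cᴴ * C)⁻¹ * (((H₂ᴴ)⁻¹ * (Cᴴ * C)) * ((Cᴴ * C)⁻¹ * X)) := by
            simp only [Matrix.mul_assoc]
        _ = (Cᴴ * C)⁻¹ * (((Cᴴ * C) * H₂) * ((Cᴴ * C)⁻¹ * X)) := by rw [r2]
        _ = H₂ * ((Cᴴ * C)⁻¹ * X) := by
            rw [Matrix.mul_assoc, Matrix.nonsing_inv_mul_cancel_left _ _ hPdet]
    obtain ⟨c, hc⟩ := scalar_of_comm _ H₁ H₂ c1 c2 hnd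
    refine ⟨c, ?_⟩
    have hX : X = (Cᴴ * C) * ((Cᴴ * C)⁻¹ * X) := by
      rw [Matrix.mul_nonsing_inv_cancel_left _ _ hPdet]
    rw [hX, hc, Matrix.mul_smul, Matrix.mul_one]
  · rintro ⟨c, rfl⟩
    constructor <;> rw [sub_eq_zero]
    · rw [Matrix.smul_mul, r1, Matrix.mul_smul]
    · rw [Matrix.smul_mul, r2, Matrix.mul_smul]
end

section
/- Let H ∈ GL₂(ℂ) not be a scalar multiple of the identity, and suppose C ∈ GL₂(ℂ) satisfies C·H·C⁻¹ unitary. Set X₀ = C*·C. Then a matrix X ∈ M₂(ℂ) satisfies X·H = (H*)⁻¹·X if and only if X₀⁻¹·X commutes with H; consequently the solution space {X : X·H = (H*)⁻¹·X} equals the span of {X₀, X₀·H} and is 2-dimensional. -/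
open Matrix

private lemma centralizer_aux (H : Matrix (Fin 2) (Fin 2) ℂ)
    (hscalar : ∀ c : ℂ, H ≠ c • (1 : Matrix (Fin 2) (Fin 2) ℂ))
    (Y : Matrix (Fin 2) (Fin 2) ℂ) (h : Y * H = H * Y) :
    ∃ α β : ℂ, Y = α • (1 : Matrix (Fin 2) (Fin 2) ℂ) + β • H := by
  have e00 := congrFun (congrFun h 0) 0
  have e01 := congrFun (congrFun h 0) 1
  have e10 := congrFun (congrFun h 1) 0
  simp only [Matrix.mul_apply, Fin.sum_univ_two] at e00 e01 e10
  by_cases hb : H 0 1 = 0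
  · by_cases hc : H 1 0 = 0
    · have had : H 0 0 ≠ H 1 1 := by
        intro had
        apply hscalar (H 0 0)
        ext i j
        fin_cases i <;> fin_cases j <;>
          simp [Matrix.one_apply, hb, hc, had]
      have hq : Y 0 1 = 0 := by
        have h2 : Y 0 1 * (H 1 1 - H 0 0) = 0 := by
          rw [hb] at e01; linear_combination e01
        rcases mul_eq_zero.mp h2 with h' | h'
        · exact h'
        · exact absurd (by linear_combination -h') had
      have hr : Y 1 0 = 0 := by
        have h2 : Y 1 0 * (H 0 0 - H 1 1) = 0 := by
          rw [hc] at e10; linear_combination e10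
        rcases mul_eq_zero.mp h2 with h' | h'
        · exact h'
        · exact absurd (by linear_combination h') had
      refine ⟨Y 0 0 - (Y 0 0 - Y 1 1) / (H 0 0 - H 1 1) * H 0 0,
              (Y 0 0 - Y 1 1) / (H 0 0 - H 1 1), ?_⟩
      have had' : H 0 0 - H 1 1 ≠ 0 := sub_ne_zero.mpr had
      ext i j
      fin_cases i <;> fin_cases j <;>
        simp only [Matrix.add_apply, Matrix.smul_apply, Matrix.one_apply,
          smul_eq_mul] <;> norm_num [hb, hc, hq, hr] <;> field_simp <;> ring
    · refine ⟨Y 0 0 - Y 1 0 / H 1 0 * H 0 0, Y 1 0 / H 1 0, ?_⟩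
      ext i j
      fin_cases i <;> fin_cases j <;>
        simp only [Matrix.add_apply, Matrix.smul_apply, Matrix.one_apply,
          smul_eq_mul] <;> norm_num <;> field_simp
      · linear_combination e00
      · linear_combination e10
  · refine ⟨Y 0 0 - Y 0 1 / H 0 1 * H 0 0, Y 0 1 / H 0 1, ?_⟩
    ext i j
    fin_cases i <;> fin_cases j <;>
      simp only [Matrix.add_apply, Matrix.smul_apply, Matrix.one_apply,
        smul_eq_mul] <;> norm_num <;> field_simp
    · linear_combination -e00
    · linear_combination -e01

theorem solution_space_single_unitarizable
    (H C : Matrix (Fin 2) (Fin 2) ℂ)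
    (hH : IsUnit H) (hC : IsUnit C)
    (hscalar : ∀ c : ℂ, H ≠ c • (1 : Matrix (Fin 2) (Fin 2) ℂ))
    (hu : (C * H * C⁻¹) * (C * H * C⁻¹)ᴴ = 1) :
    (∀ X : Matrix (Fin 2) (Fin 2) ℂ,
      X * H = (Hᴴ)⁻¹ * X ↔ ((Cᴴ * C)⁻¹ * X) * H = H * ((Cᴴ * C)⁻¹ * X)) ∧
    (∀ X : Matrix (Fin 2) (Fin 2) ℂ,
      X * H = (Hᴴ)⁻¹ * X ↔
        X ∈ Submodule.span ℂ {Cᴴ * C, Cᴴ * C * H}) ∧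
    Module.finrank ℂ ↥(Submodule.span ℂ
      ({Cᴴ * C, Cᴴ * C * H} : Set (Matrix (Fin 2) (Fin 2) ℂ))) = 2 := by
  have hCdet : IsUnit C.det := (Matrix.isUnit_iff_isUnit_det C).mp hC
  have hHdet : IsUnit H.det := (Matrix.isUnit_iff_isUnit_det H).mp hH
  have hChdet : IsUnit (Cᴴ).det := by rw [det_conjTranspose]; exact hCdet.star
  have hHhdet : IsUnit (Hᴴ).det := by rw [det_conjTranspose]; exact hHdet.star
  set X0 := Cᴴ * C with hX0def
  have hX0det : IsUnit X0.det := by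
    rw [hX0def, det_mul]; exact hChdet.mul hCdet
  -- key identity
  have hinv : (C * H * C⁻¹)⁻¹ = (C * H * C⁻¹)ᴴ := Matrix.inv_eq_right_inv hu
  have h1 : C * H⁻¹ * C⁻¹ = (Cᴴ)⁻¹ * Hᴴ * Cᴴ := by
    have lhs : (C * H * C⁻¹)⁻¹ = C * H⁻¹ * C⁻¹ := by
      rw [Matrix.mul_inv_rev, Matrix.mul_inv_rev,
        Matrix.nonsing_inv_nonsing_inv C hCdet, Matrix.mul_assoc]
    have rhs : (C * H * C⁻¹)ᴴ = (Cᴴ)⁻¹ * Hᴴ * Cᴴ := by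
      rw [conjTranspose_mul, conjTranspose_mul, Matrix.conjTranspose_nonsing_inv,
        Matrix.mul_assoc]
    rw [← lhs, hinv, rhs]
  have key : X0 * H⁻¹ = Hᴴ * X0 := by
    have h2 := congrArg (fun M => Cᴴ * (M * C)) h1
    simp only [Matrix.mul_assoc] at h2
    rw [Matrix.nonsing_inv_mul C hCdet, Matrix.mul_one] at h2
    rw [Matrix.mul_nonsing_inv_cancel_left _ _ hChdet] at h2
    simpa [hX0def, Matrix.mul_assoc] using h2
  have keyH : (Hᴴ)⁻¹ = X0 * H * X0⁻¹ := Matrix.inv_eq_right_inv (by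
    rw [← Matrix.mul_assoc, ← Matrix.mul_assoc, ← key, Matrix.mul_assoc X0 H⁻¹ H,
      Matrix.nonsing_inv_mul _ hHdet, Matrix.mul_one,
      Matrix.mul_nonsing_inv _ hX0det])
  have part1 : ∀ X : Matrix (Fin 2) (Fin 2) ℂ,
      X * H = (Hᴴ)⁻¹ * X ↔ (X0⁻¹ * X) * H = H * (X0⁻¹ * X) := by
    intro X
    constructor
    · intro hX
      have := congrArg (fun M => X0⁻¹ * M) hX
      simp only [keyH, Matrix.mul_assoc] at this ⊢
      rwa [Matrix.nonsing_inv_mul_cancel_left _ _ hX0det] at this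
    · intro hcomm
      have := congrArg (fun M => X0 * M) hcomm
      simp only [Matrix.mul_assoc] at this
      rw [Matrix.mul_nonsing_inv_cancel_left _ _ hX0det] at this
      rw [keyH, Matrix.mul_assoc, Matrix.mul_assoc, ← this]
  refine ⟨part1, ?_, ?_⟩
  · intro X
    rw [part1 X]
    constructor
    · intro hcomm
      obtain ⟨α, β, hY⟩ := centralizer_aux H hscalar (X0⁻¹ * X) hcomm
      refine Submodule.mem_span_pair.mpr ⟨α, β, ?_⟩
      have hX : X0 * (X0⁻¹ * X) = X := Matrix.mul_nonsing_inv_cancel_left _ _ hX0det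
      rw [← hX, hY, Matrix.mul_add, Matrix.mul_smul, Matrix.mul_smul, Matrix.mul_one]
    · intro hmem
      obtain ⟨a, b, hab⟩ := Submodule.mem_span_pair.mp hmem
      have hY : X0⁻¹ * X = a • (1 : Matrix (Fin 2) (Fin 2) ℂ) + b • H := by
        rw [← hab, Matrix.mul_add, Matrix.mul_smul, Matrix.mul_smul,
          Matrix.nonsing_inv_mul _ hX0det,
          Matrix.nonsing_inv_mul_cancel_left _ _ hX0det]
      rw [hY, Matrix.add_mul, Matrix.mul_add, Matrix.smul_mul, Matrix.smul_mul,
        Matrix.mul_smul, Matrix.mul_smul, Matrix.one_mul, Matrix.mul_one]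
  · have hli : LinearIndependent ℂ ![X0, X0 * H] := by
      rw [LinearIndependent.pair_iff]
      intro s t hst
      have h0 : s • (1 : Matrix (Fin 2) (Fin 2) ℂ) + t • H = 0 := by
        have hX : X0 * (s • (1 : Matrix (Fin 2) (Fin 2) ℂ) + t • H) = 0 := by
          rw [Matrix.mul_add, Matrix.mul_smul, Matrix.mul_smul, Matrix.mul_one]
          exact hst
        have := congrArg (fun M => X0⁻¹ * M) hX
        simpa [Matrix.nonsing_inv_mul_cancel_left _ _ hX0det] using this
      by_cases ht : t = 0
      · subst ht
        simp only [zero_smul, add_zero] at h0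
        have hs : s = 0 := by
          have := congrFun (congrFun h0 0) 0
          simpa [Matrix.one_apply] using this
        exact ⟨hs, rfl⟩
      · exfalso
        apply hscalar (-s / t)
        have ht' : t • H = (-s) • (1 : Matrix (Fin 2) (Fin 2) ℂ) := by
          rw [neg_smul]
          exact eq_neg_of_add_eq_zero_right h0
        have := congrArg (fun M => t⁻¹ • M) ht'
        simp only [smul_smul, inv_mul_cancel₀ ht, one_smul] at this
        rw [this, div_eq_inv_mul, mul_comm]
    have hset : ({X0, X0 * H} : Set (Matrix (Fin 2) (Fin 2) ℂ))
        = Set.range ![X0, X0 * H] := by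
      ext x
      simp only [Set.mem_insert_iff, Set.mem_singleton_iff, Set.mem_range,
        Fin.exists_fin_two, Matrix.cons_val_zero, Matrix.cons_val_one, Matrix.head_cons]
      tauto
    rw [hset, finrank_span_eq_card hli]
    simp
end

section
/- For real ρ₀, ρ₁, ρ∞ and tₖ = cos(2π ρₖ), the quantity T = 1 − t₀² − t₁² − t∞² + 2 t₀ t₁ t∞ vanishes if and only if ±ρ₀ ± ρ₁ ± ρ∞ ∈ ℤ for some choice of signs. -/
open Real

lemma cos_two_pi_eq_iff (x y : ℝ) :
    Real.cos (2 * Real.pi * x) = Real.cos (2 * Real.pi * y) ↔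
      ∃ n : ℤ, x - y = n ∨ x + y = n := by
  have h2π : (2 * Real.pi : ℝ) ≠ 0 := by positivity
  rw [Real.cos_eq_cos_iff]
  constructor
  · rintro ⟨k, hk | hk⟩
    · exact ⟨-k, Or.inl (mul_left_cancel₀ h2π (c := ((-k : ℤ) : ℝ))
        (by push_cast; linear_combination -hk))⟩
    · exact ⟨k, Or.inr (mul_left_cancel₀ h2π (by push_cast; linear_combination hk))⟩
  · rintro ⟨n, hn | hn⟩
    · exact ⟨-n, Or.inl (by push_cast; linear_combination (-(2 * Real.pi)) * hn)⟩
    · exact ⟨n, Or.inr (by push_cast; linear_combination (2 * Real.pi) * hn)⟩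

theorem goldman_T_zero_iff (ρ₀ ρ₁ ρoo : ℝ) (t₀ t₁ too : ℝ)
    (h₀ : t₀ = Real.cos (2 * Real.pi * ρ₀))
    (h₁ : t₁ = Real.cos (2 * Real.pi * ρ₁))
    (hoo : too = Real.cos (2 * Real.pi * ρoo)) :
    1 - t₀ ^ 2 - t₁ ^ 2 - too ^ 2 + 2 * t₀ * t₁ * too = 0 ↔
      ∃ e₀ e₁ eoo : ℝ, (e₀ = 1 ∨ e₀ = -1) ∧ (e₁ = 1 ∨ e₁ = -1) ∧
        (eoo = 1 ∨ eoo = -1) ∧ ∃ n : ℤ, e₀ * ρ₀ + e₁ * ρ₁ + eoo * ρoo = n := by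
  subst h₀ h₁ hoo
  have key : 1 - Real.cos (2 * Real.pi * ρ₀) ^ 2 - Real.cos (2 * Real.pi * ρ₁) ^ 2
      - Real.cos (2 * Real.pi * ρoo) ^ 2
      + 2 * Real.cos (2 * Real.pi * ρ₀) * Real.cos (2 * Real.pi * ρ₁)
        * Real.cos (2 * Real.pi * ρoo)
      = -((Real.cos (2 * Real.pi * ρoo) - Real.cos (2 * Real.pi * (ρ₀ + ρ₁)))
        * (Real.cos (2 * Real.pi * ρoo) - Real.cos (2 * Real.pi * (ρ₀ - ρ₁)))) := by
    have e1 : 2 * Real.pi * (ρ₀ + ρ₁) = 2 * Real.pi * ρ₀ + 2 * Real.pi * ρ₁ := by ring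
    have e2 : 2 * Real.pi * (ρ₀ - ρ₁) = 2 * Real.pi * ρ₀ - 2 * Real.pi * ρ₁ := by ring
    rw [e1, e2, Real.cos_add, Real.cos_sub]
    have sa := Real.sin_sq_add_cos_sq (2 * Real.pi * ρ₀)
    have sb := Real.sin_sq_add_cos_sq (2 * Real.pi * ρ₁)
    nlinarith [sa, sb]
  rw [key, neg_eq_zero, mul_eq_zero, sub_eq_zero, sub_eq_zero,
    cos_two_pi_eq_iff, cos_two_pi_eq_iff]
  constructor
  · rintro (⟨n, h | h⟩ | ⟨n, h | h⟩)
    · exact ⟨-1, -1, 1, Or.inr rfl, Or.inr rfl, Or.inl rfl, n, by push_cast; linarith⟩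
    · exact ⟨1, 1, 1, Or.inl rfl, Or.inl rfl, Or.inl rfl, n, by push_cast; linarith⟩
    · exact ⟨-1, 1, 1, Or.inr rfl, Or.inl rfl, Or.inl rfl, n, by push_cast; linarith⟩
    · exact ⟨1, -1, 1, Or.inl rfl, Or.inr rfl, Or.inl rfl, n, by push_cast; linarith⟩
  · rintro ⟨e₀, e₁, eoo, (rfl | rfl), (rfl | rfl), (rfl | rfl), n, h⟩
    · exact Or.inl ⟨n, Or.inr (by push_cast at h ⊢; linarith)⟩
    · exact Or.inl ⟨-n, Or.inl (by push_cast at h ⊢; linarith)⟩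
    · exact Or.inr ⟨n, Or.inr (by push_cast at h ⊢; linarith)⟩
    · exact Or.inr ⟨-n, Or.inl (by push_cast at h ⊢; linarith)⟩
    · exact Or.inr ⟨n, Or.inl (by push_cast at h ⊢; linarith)⟩
    · exact Or.inr ⟨-n, Or.inr (by push_cast at h ⊢; linarith)⟩
    · exact Or.inl ⟨n, Or.inl (by push_cast at h ⊢; linarith)⟩
    · exact Or.inl ⟨-n, Or.inr (by push_cast at h ⊢; linarith)⟩
end
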